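/- Let X be a locally finite weighted graph, p > 1, V ≥ 0, and f > 0 on X, and set w(x) = −div(V(∇f)_b^{p−1})(x)/f(x)^{p−1}. Then for every finitely supported u ≥ 0 on X, ∑_x V(x)|∇u|^p_p(x) ≥ ∑_x w(x) u(x)^p = −∑_x div(V(∇f)_b^{p−1})(x) u(x)^p / f(x)^{p−1}. -/

import Mathlib

/-- Signed power `t^β = |t|^{β−1} t`. -/
noncomputable def sgnPow (t β : ℝ) : ℝ := |t| ^ (β - 1) * t

/-- Pointwise `ℓ^p` gradient norm `|∇u|^p_p(x) = (1/2)∑_y b(x,y)^{p−1}|u(x) − u(y)|^p`. -/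
noncomputable def graphGradP {X : Type*} (b : X → X → ℝ) (p : ℝ) (u : X → ℝ) (x : X) : ℝ :=
  (1 / 2) * ∑' y, b x y ^ (p - 1) * |u x - u y| ^ p

/-- `(∇f)_b^{p−1}(x,y) = b(x,y)^{p−2}(f(x) − f(y))^{p−1}` (signed power). -/
noncomputable def gradPow {X : Type*} (b : X → X → ℝ) (p : ℝ) (f : X → ℝ) (x y : X) : ℝ :=
  b x y ^ (p - 2) * sgnPow (f x - f y) (p - 1)

/-- Divergence of `F : X × X → ℝ`: `div F(x) = (1/2)∑_y b(x,y)(F(y,x) − F(x,y))`. -/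
noncomputable def graphDiv {X : Type*} (b : X → X → ℝ) (F : X → X → ℝ) (x : X) : ℝ :=
  (1 / 2) * ∑' y, b x y * (F y x - F x y)

/- ### Auxiliary lemmas -/

private lemma young_aux {p : ℝ} (hp : 1 < p) {c d : ℝ} (hc : 0 ≤ c) (hd : 0 ≤ d) :
    p * c ^ (p - 1) * d ≤ (p - 1) * c ^ p + d ^ p := by
  have hp0 : (0:ℝ) < p := by linarith
  have hp1 : (0:ℝ) < p - 1 := by linarith
  have hpq : p.HolderConjugate (p / (p - 1)) := Real.HolderConjugate.conjExponent hp
  have h1 : d * c ^ (p - 1) ≤ d ^ p / p + (c ^ (p - 1)) ^ (p / (p - 1)) / (p / (p - 1)) :=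
    Real.young_inequality_of_nonneg hd (Real.rpow_nonneg hc _) hpq
  have h2 : (c ^ (p - 1)) ^ (p / (p - 1)) = c ^ p := by
    rw [← Real.rpow_mul hc]
    congr 1
    field_simp
  rw [h2] at h1
  have h3 : c ^ p / (p / (p - 1)) = c ^ p * (p - 1) / p := by
    rw [div_div_eq_mul_div]
  rw [h3] at h1
  have h4 := mul_le_mul_of_nonneg_left h1 hp0.le
  calc p * c ^ (p - 1) * d = p * (d * c ^ (p - 1)) := by ring
    _ ≤ p * (d ^ p / p + c ^ p * (p - 1) / p) := h4
    _ = (p - 1) * c ^ p + d ^ p := by field_simp; ring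

private lemma rpow_sub_one_mul {x p : ℝ} (hx : 0 ≤ x) (hp : p ≠ 0) :
    x ^ (p - 1) * x = x ^ p := by
  rw [← Real.rpow_add_one' hx (by rwa [sub_add_cancel]), sub_add_cancel]

private lemma sgnPow_of_nonneg {x β : ℝ} (hx : 0 ≤ x) (hβ : β ≠ 0) : sgnPow x β = x ^ β := by
  rw [sgnPow, abs_of_nonneg hx, rpow_sub_one_mul hx hβ]

private lemma sgnPow_neg (x β : ℝ) : sgnPow (-x) β = -sgnPow x β := by
  rw [sgnPow, sgnPow, abs_neg]; ring

private lemma picone_key {p : ℝ} (hp : 1 < p) {Z c s t : ℝ} (hZ : 0 ≤ Z) (hc : 0 ≤ c)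
    (ht : 0 < t) (hst : t < s) :
    (s - t) ^ (p - 1) * ((Z * s) ^ p / s ^ (p - 1) - c ^ p / t ^ (p - 1)) ≤ |Z * s - c| ^ p := by
  have hs : 0 < s := ht.trans hst
  have hr : 0 < s - t := by linarith
  have hp0 : (0:ℝ) < p := by linarith
  have hp1 : p ≠ 0 := hp0.ne'
  have hQX : Z ^ (p - 1) * Z = Z ^ p := rpow_sub_one_mul hZ hp1
  have e1 : (Z * s) ^ p / s ^ (p - 1) = Z ^ p * s := by
    rw [Real.mul_rpow hZ hs.le, ← rpow_sub_one_mul hs.le hp1]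
    field_simp
  -- Young inequality 1
  have Y1 : p * (Z * t) ^ (p - 1) * c ≤ (p - 1) * (Z * t) ^ p + c ^ p :=
    young_aux hp (mul_nonneg hZ ht.le) hc
  have hXt1 : (Z * t) ^ (p - 1) = Z ^ (p - 1) * t ^ (p - 1) := Real.mul_rpow hZ ht.le
  have hXtp : (Z * t) ^ p = Z ^ p * (t ^ (p - 1) * t) := by
    rw [Real.mul_rpow hZ ht.le, rpow_sub_one_mul ht.le hp1]
  rw [hXt1, hXtp] at Y1
  have htp : (0:ℝ) < t ^ (p - 1) := Real.rpow_pos_of_pos ht _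
  have e4 : p * Z ^ (p - 1) * c ≤ (p - 1) * Z ^ p * t + c ^ p / t ^ (p - 1) := by
    have h5 : (p * Z ^ (p - 1) * c - (p - 1) * Z ^ p * t) * t ^ (p - 1) ≤ c ^ p := by
      nlinarith [Y1]
    have h6 := (le_div_iff₀ htp).mpr h5
    linarith
  -- Young inequality 2
  have Y2 : p * ((s - t) * Z) ^ (p - 1) * |Z * s - c| ≤
      (p - 1) * ((s - t) * Z) ^ p + |Z * s - c| ^ p :=
    young_aux hp (mul_nonneg hr.le hZ) (abs_nonneg _)
  have hrX1 : ((s - t) * Z) ^ (p - 1) = (s - t) ^ (p - 1) * Z ^ (p - 1) :=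
    Real.mul_rpow hr.le hZ
  have hrXp : ((s - t) * Z) ^ p = ((s - t) ^ (p - 1) * (s - t)) * Z ^ p := by
    rw [Real.mul_rpow hr.le hZ, rpow_sub_one_mul hr.le hp1]
  rw [hrX1, hrXp] at Y2
  have hRQ : 0 ≤ (s - t) ^ (p - 1) * Z ^ (p - 1) :=
    mul_nonneg (Real.rpow_nonneg hr.le _) (Real.rpow_nonneg hZ _)
  have hAle : Z * s - c ≤ |Z * s - c| := le_abs_self _
  have step1 : p * ((s - t) ^ (p - 1) * Z ^ (p - 1)) * (Z * s - c)
      - (p - 1) * (((s - t) ^ (p - 1) * (s - t)) * Z ^ p) ≤ |Z * s - c| ^ p := by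
    have := mul_le_mul_of_nonneg_left hAle (mul_nonneg hp0.le hRQ)
    nlinarith [Y2]
  have e6 : 0 ≤ (s - t) ^ (p - 1) *
      ((p - 1) * Z ^ p * t + c ^ p / t ^ (p - 1) - p * Z ^ (p - 1) * c) :=
    mul_nonneg (Real.rpow_nonneg hr.le _) (by linarith)
  have expand : p * ((s - t) ^ (p - 1) * Z ^ (p - 1)) * (Z * s - c)
      - (p - 1) * (((s - t) ^ (p - 1) * (s - t)) * Z ^ p)
      - (s - t) ^ (p - 1) * (Z ^ p * s - c ^ p / t ^ (p - 1))
      = (s - t) ^ (p - 1) *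
        ((p - 1) * Z ^ p * t + c ^ p / t ^ (p - 1) - p * Z ^ (p - 1) * c) := by
    linear_combination (p * (s - t) ^ (p - 1) * s) * hQX
  rw [e1]
  linarith [step1, e6, expand]

private lemma picone_le {p : ℝ} (hp : 1 < p) {a c s t : ℝ} (ha : 0 ≤ a) (hc : 0 ≤ c)
    (ht : 0 < t) (hts : t ≤ s) :
    sgnPow (s - t) (p - 1) * (a ^ p / s ^ (p - 1) - c ^ p / t ^ (p - 1)) ≤ |a - c| ^ p := by
  have hs : 0 < s := lt_of_lt_of_le ht hts
  have hp1 : p - 1 ≠ 0 := ne_of_gt (by linarith)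
  rw [sgnPow_of_nonneg (by linarith) hp1]
  rcases eq_or_lt_of_le hts with h | h
  · rw [show s - t = 0 by rw [h]; ring, Real.zero_rpow hp1, zero_mul]
    positivity
  · have hkey := picone_key hp (Z := a / s) (div_nonneg ha hs.le) hc ht h
    rwa [div_mul_cancel₀ a hs.ne'] at hkey

private lemma picone {p : ℝ} (hp : 1 < p) {a c s t : ℝ} (ha : 0 ≤ a) (hc : 0 ≤ c)
    (hs : 0 < s) (ht : 0 < t) :
    sgnPow (s - t) (p - 1) * (a ^ p / s ^ (p - 1) - c ^ p / t ^ (p - 1)) ≤ |a - c| ^ p := by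
  rcases le_total t s with h | h
  · exact picone_le hp ha hc ht h
  · have h2 := picone_le hp hc ha hs h
    have h3 : sgnPow (s - t) (p - 1) = -sgnPow (t - s) (p - 1) := by
      rw [show s - t = -(t - s) by ring, sgnPow_neg]
    rw [h3, abs_sub_comm]
    linarith [h2]

/-- The `ℓ^p` weighted Hardy inequality on a locally finite graph:
for `p > 1`, `V ≥ 0`, `f > 0` and `u ≥ 0` finitely supported,
`∑ V |∇u|^p_p ≥ ∑ (−div(V(∇f)_b^{p−1})/f^{p−1}) u^p`. -/
theorem graph_hardy_lp {X : Type*} (b : X → X → ℝ) (p : ℝ) (hp : 1 < p)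
    (hsym : ∀ x y, b x y = b y x) (hnonneg : ∀ x y, 0 ≤ b x y)
    (hdiag : ∀ x, b x x = 0) (hlf : ∀ x, {y | b x y ≠ 0}.Finite)
    (V f u : X → ℝ) (hV : ∀ x, 0 ≤ V x) (hf : ∀ x, 0 < f x)
    (hu0 : ∀ x, 0 ≤ u x) (hu : (Function.support u).Finite) :
    ∑' x, V x * graphGradP b p u x ≥
      ∑' x, (-(graphDiv b (fun x y => V x * gradPow b p f x y) x) / f x ^ (p - 1)) *
        u x ^ p := by
  classical
  have hp0 : (0:ℝ) < p := by linarith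
  have hp1 : (0:ℝ) < p - 1 := by linarith
  set F : X → X → ℝ := fun x y => V x * gradPow b p f x y with hF
  set S : Finset X := hu.toFinset with hSdef
  have hmemS : ∀ x, x ∈ S ↔ u x ≠ 0 := by
    intro x
    simp [hSdef, Set.Finite.mem_toFinset, Function.mem_support]
  set T : Finset X := S ∪ S.biUnion (fun z => (hlf z).toFinset) with hTdef
  have hST : S ⊆ T := Finset.subset_union_left
  have hnbT : ∀ x ∈ S, ∀ y, b x y ≠ 0 → y ∈ T := by
    intro x hx y hy
    exact Finset.mem_union_right _ (Finset.mem_biUnion.mpr ⟨x, hx, (hlf x).mem_toFinset.mpr hy⟩)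
  have huT : ∀ x, x ∉ T → u x = 0 := by
    intro x hx
    by_contra h
    exact hx (hST ((hmemS x).mpr h))
  -- inner gradient sums are finite sums over T
  have grad_eq : ∀ x, graphGradP b p u x
      = (1 / 2) * ∑ y ∈ T, b x y ^ (p - 1) * |u x - u y| ^ p := by
    intro x
    unfold graphGradP
    congr 1
    apply tsum_eq_sum
    intro y hy
    by_cases hb : b x y = 0
    · rw [hb, Real.zero_rpow (ne_of_gt hp1), zero_mul]
    · have hyu : u y = 0 := by
        by_contra h
        exact hy (hST ((hmemS y).mpr h))
      have hxu : u x = 0 := by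
        by_contra h
        exact hy (hnbT x ((hmemS x).mpr h) y hb)
      rw [hxu, hyu, sub_zero, abs_zero, Real.zero_rpow (ne_of_gt hp0), mul_zero]
  have lhs_zero : ∀ x, x ∉ T → V x * graphGradP b p u x = 0 := by
    intro x hx
    have h0 : ∀ y ∈ T, b x y ^ (p - 1) * |u x - u y| ^ p = 0 := by
      intro y _
      by_cases hb : b x y = 0
      · rw [hb, Real.zero_rpow (ne_of_gt hp1), zero_mul]
      · have hyu : u y = 0 := by
          by_contra h
          exact hx (hnbT y ((hmemS y).mpr h) x (by rw [← hsym x y]; exact hb))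
        rw [huT x hx, hyu, sub_zero, abs_zero, Real.zero_rpow (ne_of_gt hp0), mul_zero]
    rw [grad_eq x, Finset.sum_eq_zero h0, mul_zero, mul_zero]
  have rhs_zero : ∀ x, x ∉ T →
      (-(graphDiv b F x) / f x ^ (p - 1)) * u x ^ p = 0 := by
    intro x hx
    rw [huT x hx, Real.zero_rpow (ne_of_gt hp0), mul_zero]
  rw [ge_iff_le, tsum_eq_sum rhs_zero, tsum_eq_sum lhs_zero]
  -- divergence as a finite sum over T
  have div_eq : ∀ x ∈ S, graphDiv b F x = (1 / 2) * ∑ y ∈ T, b x y * (F y x - F x y) := by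
    intro x hx
    unfold graphDiv
    congr 1
    apply tsum_eq_sum
    intro y hy
    have hb : b x y = 0 := by
      by_contra h
      exact hy (hnbT x hx y h)
    rw [hb, zero_mul]
  have hfne : ∀ x : X, f x ^ (p - 1) ≠ 0 := fun x => (Real.rpow_pos_of_pos (hf x) _).ne'
  have rhs_form : ∀ x ∈ T, (-(graphDiv b F x) / f x ^ (p - 1)) * u x ^ p
      = ∑ y ∈ T, (1 / 2) * (b x y * F x y) * (u x ^ p / f x ^ (p - 1))
        - ∑ y ∈ T, (1 / 2) * (b x y * F y x) * (u x ^ p / f x ^ (p - 1)) := by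
    intro x _
    by_cases hux : u x = 0
    · rw [hux, Real.zero_rpow (ne_of_gt hp0), mul_zero]
      rw [Finset.sum_eq_zero (fun y _ => by rw [zero_div, mul_zero]),
        Finset.sum_eq_zero (fun y _ => by rw [zero_div, mul_zero]), sub_zero]
    · have hxS : x ∈ S := (hmemS x).mpr hux
      rw [div_eq x hxS]
      rw [← Finset.sum_sub_distrib]
      have hsum : ∑ y ∈ T, ((1 / 2) * (b x y * F x y) * (u x ^ p / f x ^ (p - 1))
          - (1 / 2) * (b x y * F y x) * (u x ^ p / f x ^ (p - 1)))
          = (∑ y ∈ T, b x y * (F y x - F x y)) * (-(1 / 2) * (u x ^ p / f x ^ (p - 1))) := by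
        rw [Finset.sum_mul]
        exact Finset.sum_congr rfl fun y _ => by ring
      rw [hsum]
      field_simp
  have lhs_form : ∀ x ∈ T, V x * graphGradP b p u x
      = ∑ y ∈ T, (1 / 2) * V x * (b x y ^ (p - 1) * |u x - u y| ^ p) := by
    intro x _
    rw [grad_eq x]
    simp only [Finset.mul_sum]
    exact Finset.sum_congr rfl fun y _ => by ring
  rw [Finset.sum_congr rfl rhs_form, Finset.sum_congr rfl lhs_form]
  -- symmetrize the second double sum
  have swap : ∑ x ∈ T, ∑ y ∈ T, (1 / 2) * (b x y * F y x) * (u x ^ p / f x ^ (p - 1))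
      = ∑ x ∈ T, ∑ y ∈ T, (1 / 2) * (b x y * F x y) * (u y ^ p / f y ^ (p - 1)) := by
    rw [Finset.sum_comm]
    exact Finset.sum_congr rfl fun y _ => Finset.sum_congr rfl fun x _ => by rw [hsym x y]
  rw [Finset.sum_sub_distrib, swap, ← Finset.sum_sub_distrib]
  have recombine : ∀ x ∈ T,
      (∑ y ∈ T, (1 / 2) * (b x y * F x y) * (u x ^ p / f x ^ (p - 1))
        - ∑ y ∈ T, (1 / 2) * (b x y * F x y) * (u y ^ p / f y ^ (p - 1)))
      = ∑ y ∈ T, (1 / 2) * (b x y * F x y) *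
          (u x ^ p / f x ^ (p - 1) - u y ^ p / f y ^ (p - 1)) := by
    intro x _
    rw [← Finset.sum_sub_distrib]
    exact Finset.sum_congr rfl fun y _ => by ring
  rw [Finset.sum_congr rfl recombine]
  -- termwise Picone inequality
  apply Finset.sum_le_sum
  intro x _
  apply Finset.sum_le_sum
  intro y _
  by_cases hb : b x y = 0
  · rw [hb, Real.zero_rpow (ne_of_gt hp1)]
    simp
  · have hbpos : 0 < b x y := lt_of_le_of_ne (hnonneg x y) (Ne.symm hb)
    have hbb : b x y * b x y ^ (p - 2) = b x y ^ (p - 1) := by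
      rw [mul_comm, ← Real.rpow_add_one' (hnonneg x y) (by
        intro h'
        exact (ne_of_gt hp1) (by linarith))]
      congr 1
      ring
    have hpic := picone hp (hu0 x) (hu0 y) (hf x) (hf y)
    have hcoef : 0 ≤ (1 / 2) * V x * b x y ^ (p - 1) :=
      mul_nonneg (mul_nonneg (by norm_num) (hV x)) (Real.rpow_nonneg (hnonneg x y) _)
    have hFxy : F x y = V x * (b x y ^ (p - 2) * sgnPow (f x - f y) (p - 1)) := by
      simp only [hF, gradPow]
    calc (1 / 2) * (b x y * F x y) * (u x ^ p / f x ^ (p - 1) - u y ^ p / f y ^ (p - 1))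
        = ((1 / 2) * V x * b x y ^ (p - 1)) *
            (sgnPow (f x - f y) (p - 1) *
              (u x ^ p / f x ^ (p - 1) - u y ^ p / f y ^ (p - 1))) := by
          rw [hFxy, ← hbb]; ring
      _ ≤ ((1 / 2) * V x * b x y ^ (p - 1)) * |u x - u y| ^ p :=
          mul_le_mul_of_nonneg_left hpic hcoef
      _ = (1 / 2) * V x * (b x y ^ (p - 1) * |u x - u y| ^ p) := by ring
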